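/- Fix θ ≥ 1, s > 0 and N ≥ 2, and let λ ∈ 𝕐^N be distributed according to the discrete β-ensemble ℙ_N^s with ℓ_i = λ_{N−i+1} + θ·i. Then 𝔼[ ∏_{j=1}^{N−1} (1 − 1/(ℓ_N − ℓ_j))·(1 − (2θ−1)/(ℓ_N − ℓ_j + θ − 1)) ] = 𝔼[ sθ/(ℓ_N + 1) ]. -/

import Mathlib

open Filter MeasureTheory

attribute [local instance] Classical.propDecidable

noncomputable section

/-- Partitions with at most `N` parts, as antitone tuples of naturals
(`l 0 = λ₁` is the largest part). -/
abbrev YoungN (N : ℕ) : Type := {l : Fin N → ℕ // Antitone l}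

/-- `ell θ l j = λ_{N-j+1} + θ·j` for `1 ≤ j ≤ N` (junk value `0` otherwise). -/
def ell (θ : ℝ) {N : ℕ} (l : YoungN N) (j : ℕ) : ℝ :=
  if h : 1 ≤ j ∧ j ≤ N then (l.val ⟨N - j, by omega⟩ : ℝ) + θ * j else 0

/-- The weight `W_N^s(λ)` of the discrete β-ensemble. -/
def betaWeight (θ s : ℝ) (N : ℕ) (l : YoungN N) : ℝ :=
  (∏ i ∈ Finset.Icc 1 N, ∏ j ∈ Finset.Icc 1 N,
    if i < j then
      Real.Gamma (ell θ l j - ell θ l i + 1) * Real.Gamma (ell θ l j - ell θ l i + θ) /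
        (Real.Gamma (ell θ l j - ell θ l i) * Real.Gamma (ell θ l j - ell θ l i + 1 - θ))
    else 1) *
  ∏ i ∈ Finset.Icc 1 N, (s * θ) ^ (ell θ l i) / Real.Gamma (ell θ l i + 1)

/-- Expectation under the discrete β-ensemble `ℙ_N^s`. -/
def betaE (θ s : ℝ) (N : ℕ) (f : YoungN N → ℝ) : ℝ :=
  (∑' l : YoungN N, betaWeight θ s N l * f l) / ∑' l : YoungN N, betaWeight θ s N l

/-- Probability of an event under the discrete β-ensemble `ℙ_N^s`. -/
def betaP (θ s : ℝ) (N : ℕ) (A : YoungN N → Prop) : ℝ :=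
  betaE θ s N fun l => if A l then 1 else 0

/-! Adding one box to the first row of `λ` raises `ℓ_N` by one and fixes the other `ℓ_j`.
Since `Γ(x + 1) = x Γ(x)`, each pair factor of the weight involving `ℓ_N`, and the one-point
factor of `ℓ_N`, change by an explicit rational factor, and together these give
`W(λ + □) · ∏_j (1 - 1/(ℓ_N - ℓ_j))(1 - (2θ-1)/(ℓ_N - ℓ_j + θ - 1)) = W(λ) · sθ/(ℓ_N + 1)`,
so the left-hand sum reindexes into the right-hand one. The partitions not of the form
`λ + □` have `λ₁ = λ₂`, hence `ℓ_N - ℓ_{N-1} = θ`, and their factor `j = N - 1` vanishes. -/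

open Finset

def betaInteraction (θ d : ℝ) : ℝ :=
  Real.Gamma (d + 1) * Real.Gamma (d + θ) / (Real.Gamma d * Real.Gamma (d + 1 - θ))

def nekrasovFactor (θ d : ℝ) : ℝ :=
  (1 - 1 / d) * (1 - (2 * θ - 1) / (d + θ - 1))

theorem nekrasovFactor_self {θ : ℝ} (hθ : 2 * θ - 1 ≠ 0) : nekrasovFactor θ θ = 0 := by
  rw [nekrasovFactor, show θ + θ - 1 = 2 * θ - 1 by ring, div_self hθ, sub_self, mul_zero]

theorem betaInteraction_add_one_mul_nekrasovFactor {θ y : ℝ} (hθ : 0 < θ) (hy : θ ≤ y) :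
    betaInteraction θ (y + 1) * nekrasovFactor θ (y + 1) = betaInteraction θ y := by
  have hy0 : 0 < y := hθ.trans_le hy
  have hyθ : 0 < y + θ := by linarith
  have hyθ' : 0 < y + 1 - θ := by linarith
  have := Real.Gamma_pos_of_pos hy0
  have := Real.Gamma_pos_of_pos hyθ
  have := Real.Gamma_pos_of_pos hyθ'
  rw [betaInteraction, betaInteraction, nekrasovFactor, show y + 1 + θ - 1 = y + θ by ring,
    show y + 1 + θ = y + θ + 1 by ring, show y + 1 + 1 - θ = y + 1 - θ + 1 by ring,
    Real.Gamma_add_one (by positivity), Real.Gamma_add_one hyθ.ne',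
    Real.Gamma_add_one hyθ'.ne', Real.Gamma_add_one hy0.ne']
  field_simp
  ring

theorem rpow_add_one_div_Gamma {c x : ℝ} (hc : c ≠ 0) (hx : x + 1 ≠ 0) :
    c ^ (x + 1) / Real.Gamma (x + 1 + 1) = c ^ x / Real.Gamma (x + 1) * (c / (x + 1)) := by
  rw [Real.rpow_add_one hc, Real.Gamma_add_one hx, div_mul_div_comm, mul_comm (x + 1)]

def ensembleWeight (θ s : ℝ) (N : ℕ) (x : ℕ → ℝ) : ℝ :=
  (∏ i ∈ Icc 1 N, ∏ j ∈ Icc 1 N, if i < j then betaInteraction θ (x j - x i) else 1) *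
    ∏ i ∈ Icc 1 N, (s * θ) ^ x i / Real.Gamma (x i + 1)

theorem betaWeight_eq_ensembleWeight (θ s : ℝ) {N : ℕ} (l : YoungN N) :
    betaWeight θ s N l = ensembleWeight θ s N (ell θ l) :=
  rfl

theorem ensembleWeight_congr (θ s : ℝ) (n : ℕ) {x y : ℕ → ℝ} (h : ∀ i ∈ Icc 1 n, x i = y i) :
    ensembleWeight θ s n x = ensembleWeight θ s n y := by
  unfold ensembleWeight
  congr 1
  · refine prod_congr rfl fun i hi => prod_congr rfl fun j hj => ?_
    rw [h i hi, h j hj]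
  · exact prod_congr rfl fun i hi => by rw [h i hi]

theorem ensembleWeight_succ (θ s : ℝ) (n : ℕ) (x : ℕ → ℝ) :
    ensembleWeight θ s (n + 1) x =
      ensembleWeight θ s n x * (∏ i ∈ Icc 1 n, betaInteraction θ (x (n + 1) - x i)) *
        ((s * θ) ^ x (n + 1) / Real.Gamma (x (n + 1) + 1)) := by
  have hlast : ∏ j ∈ Icc 1 (n + 1),
      (if n + 1 < j then betaInteraction θ (x j - x (n + 1)) else 1) = 1 :=
    prod_eq_one fun j hj => if_neg (by simp at hj; omega)
  have hrow (i : ℕ) (hi : i ∈ Icc 1 n) :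
      ∏ j ∈ Icc 1 (n + 1), (if i < j then betaInteraction θ (x j - x i) else 1) =
        (∏ j ∈ Icc 1 n, if i < j then betaInteraction θ (x j - x i) else 1) *
          betaInteraction θ (x (n + 1) - x i) := by
    rw [prod_Icc_succ_top (by omega), if_pos (by simp at hi; omega)]
  rw [ensembleWeight, ensembleWeight, prod_Icc_succ_top (by omega), hlast, mul_one,
    prod_congr rfl hrow, prod_mul_distrib, prod_Icc_succ_top (by omega)]
  ring

theorem ensembleWeight_mul_prod_nekrasovFactor {θ s : ℝ} (hθ : 0 < θ) (hs : s ≠ 0) {n : ℕ}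
    {x x' : ℕ → ℝ} (hgap : ∀ i ∈ Icc 1 n, θ ≤ x (n + 1) - x i) (hlast : x (n + 1) + 1 ≠ 0)
    (hx' : ∀ i ∈ Icc 1 n, x' i = x i) (hx'_last : x' (n + 1) = x (n + 1) + 1) :
    ensembleWeight θ s (n + 1) x' *
        ∏ i ∈ Icc 1 n, nekrasovFactor θ (x' (n + 1) - x' i) =
      ensembleWeight θ s (n + 1) x * (s * θ / (x (n + 1) + 1)) := by
  have hpairs : (∏ i ∈ Icc 1 n, betaInteraction θ (x' (n + 1) - x' i)) *
      ∏ i ∈ Icc 1 n, nekrasovFactor θ (x' (n + 1) - x' i) =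
        ∏ i ∈ Icc 1 n, betaInteraction θ (x (n + 1) - x i) := by
    rw [← prod_mul_distrib]
    refine prod_congr rfl fun i hi => ?_
    rw [hx'_last, hx' i hi, show x (n + 1) + 1 - x i = x (n + 1) - x i + 1 by ring]
    exact betaInteraction_add_one_mul_nekrasovFactor hθ (hgap i hi)
  rw [ensembleWeight_succ, ensembleWeight_succ, ensembleWeight_congr θ s n hx', ← hpairs,
    hx'_last, rpow_add_one_div_Gamma (mul_ne_zero hs hθ.ne') hlast]
  ring

def succFirst {N : ℕ} (l : YoungN N) : YoungN N :=
  ⟨fun i => if (i : ℕ) = 0 then l.val i + 1 else l.val i, fun a b hab => by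
    have := l.2 hab
    have : (a : ℕ) ≤ b := hab
    dsimp only
    split_ifs <;> omega⟩

theorem succFirst_val_apply {N : ℕ} (l : YoungN N) (i : Fin N) :
    (succFirst l).val i = if (i : ℕ) = 0 then l.val i + 1 else l.val i :=
  rfl

theorem succFirst_injective {N : ℕ} : Function.Injective (succFirst (N := N)) := by
  intro l l' h
  ext i
  have := congrFun (congrArg Subtype.val h) i
  rw [succFirst_val_apply, succFirst_val_apply] at this
  split_ifs at this <;> omega

theorem mem_range_succFirst {N : ℕ} (hN : 2 ≤ N) {μ : YoungN N}
    (h : μ.val ⟨0, by omega⟩ ≠ μ.val ⟨1, by omega⟩) : μ ∈ Set.range succFirst := by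
  have hlt : μ.val ⟨1, by omega⟩ < μ.val ⟨0, by omega⟩ :=
    lt_of_le_of_ne (μ.2 (show (0 : ℕ) ≤ 1 by omega)) h.symm
  have hrow (b : Fin N) (hb : (b : ℕ) ≠ 0) : μ.val b ≤ μ.val ⟨1, by omega⟩ :=
    μ.2 (show 1 ≤ (b : ℕ) by omega)
  refine ⟨⟨fun i => if (i : ℕ) = 0 then μ.val i - 1 else μ.val i, fun a b hab => ?_⟩, ?_⟩
  · have := μ.2 hab
    have : (a : ℕ) ≤ b := hab
    dsimp only
    split_ifs with hb ha ha
    · omega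
    · omega
    · rw [show a = ⟨0, by omega⟩ from Fin.ext ha]
      have := hrow b hb
      omega
    · omega
  · ext i
    rw [succFirst_val_apply]
    dsimp only
    split_ifs with hi
    · rw [show i = ⟨0, by omega⟩ from Fin.ext hi]
      omega
    · rfl

theorem ell_of_mem (θ : ℝ) {N : ℕ} (l : YoungN N) {j : ℕ} (h1 : 1 ≤ j) (h2 : j ≤ N) :
    ell θ l j = (l.val ⟨N - j, by omega⟩ : ℝ) + θ * j :=
  dif_pos ⟨h1, h2⟩

theorem ell_pos {θ : ℝ} (hθ : 0 < θ) {N : ℕ} (l : YoungN N) {j : ℕ} (h1 : 1 ≤ j) (h2 : j ≤ N) :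
    0 < ell θ l j := by
  rw [ell_of_mem θ l h1 h2]
  positivity

theorem le_ell_sub_ell {θ : ℝ} (hθ : 0 ≤ θ) {N : ℕ} (l : YoungN N) {i j : ℕ}
    (hi : 1 ≤ i) (hij : i < j) (hj : j ≤ N) : θ ≤ ell θ l j - ell θ l i := by
  rw [ell_of_mem θ l (by omega) hj, ell_of_mem θ l hi (by omega)]
  have : (l.val ⟨N - i, by omega⟩ : ℝ) ≤ l.val ⟨N - j, by omega⟩ :=
    Nat.cast_le.2 (l.2 (show N - j ≤ N - i by omega))
  have : (i : ℝ) + 1 ≤ j := by exact_mod_cast hij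
  nlinarith

theorem ell_last_sub_ell_pred (θ : ℝ) {N : ℕ} (hN : 2 ≤ N) (l : YoungN N) :
    ell θ l N - ell θ l (N - 1) =
      (l.val ⟨0, by omega⟩ : ℝ) - l.val ⟨1, by omega⟩ + θ := by
  rw [ell_of_mem θ l (by omega) le_rfl, ell_of_mem θ l (by omega) (by omega),
    Nat.cast_sub (by omega : 1 ≤ N)]
  simp only [Nat.sub_self, Nat.sub_sub_self (by omega : 1 ≤ N), Nat.cast_one]
  ring

theorem ell_succFirst_of_lt (θ : ℝ) {N : ℕ} (l : YoungN N) {j : ℕ} (h1 : 1 ≤ j) (h2 : j < N) :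
    ell θ (succFirst l) j = ell θ l j := by
  rw [ell_of_mem θ _ h1 h2.le, ell_of_mem θ l h1 h2.le, succFirst_val_apply,
    if_neg (by simp; omega)]

theorem ell_succFirst_last (θ : ℝ) {N : ℕ} (hN : 1 ≤ N) (l : YoungN N) :
    ell θ (succFirst l) N = ell θ l N + 1 := by
  rw [ell_of_mem θ _ hN le_rfl, ell_of_mem θ l hN le_rfl, succFirst_val_apply, if_pos (by simp)]
  push_cast
  ring

theorem betaWeight_succFirst_mul {θ s : ℝ} (hθ : 0 < θ) (hs : s ≠ 0) {N : ℕ} (hN : 1 ≤ N)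
    (l : YoungN N) :
    betaWeight θ s N (succFirst l) *
        ∏ j ∈ Icc 1 (N - 1), nekrasovFactor θ (ell θ (succFirst l) N - ell θ (succFirst l) j) =
      betaWeight θ s N l * (s * θ / (ell θ l N + 1)) := by
  obtain ⟨n, rfl⟩ : ∃ n, N = n + 1 := ⟨N - 1, by omega⟩
  rw [Nat.add_sub_cancel, betaWeight_eq_ensembleWeight, betaWeight_eq_ensembleWeight]
  exact ensembleWeight_mul_prod_nekrasovFactor hθ hs
    (fun i hi => le_ell_sub_ell hθ.le l (mem_Icc.1 hi).1 (by simp at hi; omega) le_rfl)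
    (by linarith [ell_pos hθ l hN le_rfl])
    (fun i hi => ell_succFirst_of_lt θ l (mem_Icc.1 hi).1 (by simp at hi; omega))
    (ell_succFirst_last θ hN l)

theorem prod_nekrasovFactor_eq_zero {θ : ℝ} (hθ : 2 * θ - 1 ≠ 0) {N : ℕ} (hN : 2 ≤ N)
    {μ : YoungN N} (h : μ.val ⟨0, by omega⟩ = μ.val ⟨1, by omega⟩) :
    ∏ j ∈ Icc 1 (N - 1), nekrasovFactor θ (ell θ μ N - ell θ μ j) = 0 := by
  refine prod_eq_zero (mem_Icc.2 ⟨by omega, le_rfl⟩) ?_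
  rw [ell_last_sub_ell_pred θ hN, h, sub_self, zero_add, nekrasovFactor_self hθ]

theorem nekrasov_identity_down
    (θ s : ℝ) (hθ : 1 ≤ θ) (hs : 0 < s) (N : ℕ) (hN : 2 ≤ N) :
    betaE θ s N (fun l =>
      ∏ j ∈ Finset.Icc 1 (N - 1),
        (1 - 1 / (ell θ l N - ell θ l j)) *
          (1 - (2 * θ - 1) / (ell θ l N - ell θ l j + θ - 1))) =
    betaE θ s N (fun l => s * θ / (ell θ l N + 1)) := by
  have hθ0 : 0 < θ := by linarith
  have hmul (l : YoungN N) := betaWeight_succFirst_mul hθ0 hs.ne' (by omega) l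
  unfold betaE
  congr 1
  refine tsum_eq_tsum_of_ne_zero_bij (fun l => succFirst l.val)
    (fun l l' h => Subtype.ext (succFirst_injective h)) ?_ fun l => hmul l
  intro μ hμ
  have hprod : ∏ j ∈ Icc 1 (N - 1), nekrasovFactor θ (ell θ μ N - ell θ μ j) ≠ 0 :=
    right_ne_zero_of_mul hμ
  obtain ⟨l, rfl⟩ := mem_range_succFirst hN
    fun h => hprod (prod_nekrasovFactor_eq_zero (by linarith) hN h)
  exact ⟨⟨l, by rw [Function.mem_support, ← hmul]; exact hμ⟩, rfl⟩

end
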